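/- arXiv:1911.06120 — 4 statements merged into one kernel-verified Lean document; each statement's English description precedes it below -/
import Mathlib

section
/- If a subgroup Γ of Aff(2,ℍ) acts freely on ℍ², then Γ is conjugate in Aff(2,ℍ) to a subgroup of G₂, the group of all matrices [[1,b,r],[0,d,s],[0,0,1]] with b,r,s,d ∈ ℍ, d ≠ 0. -/
open Quaternion Matrix

noncomputable section

/-- Membership in Aff(2,ℍ): a 3×3 quaternionic matrix whose last row is (0,0,1). -/
def IsAffMat (M : Matrix (Fin 3) (Fin 3) ℍ[ℝ]) : Prop :=
  M 2 0 = 0 ∧ M 2 1 = 0 ∧ M 2 2 = 1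

/-- The affine action of a 3×3 quaternionic matrix on ℍ²:
`(x,y) ↦ (ax+by+r, cx+dy+s)`. -/
def affAct (M : Matrix (Fin 3) (Fin 3) ℍ[ℝ]) (p : ℍ[ℝ] × ℍ[ℝ]) : ℍ[ℝ] × ℍ[ℝ] :=
  (M 0 0 * p.1 + M 0 1 * p.2 + M 0 2, M 1 0 * p.1 + M 1 1 * p.2 + M 1 2)

/-- A subgroup of GL(3,ℍ) (whose elements are affine) acts freely on ℍ² if no element
other than the identity fixes a point. -/
def ActsFreely (Γ : Subgroup (Matrix (Fin 3) (Fin 3) ℍ[ℝ])ˣ) : Prop :=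
  ∀ g ∈ Γ, (∃ p : ℍ[ℝ] × ℍ[ℝ], affAct g.val p = p) → g = 1
/-- Membership in G₂: matrices `[[1,b,r],[0,d,s],[0,0,1]]` with `d ≠ 0`. -/
def InG2 (M : Matrix (Fin 3) (Fin 3) ℍ[ℝ]) : Prop :=
  M 0 0 = 1 ∧ M 1 0 = 0 ∧ M 1 1 ≠ 0 ∧ IsAffMat M

/-!
Write `γ x = A_γ x + t_γ`. It suffices to find `u ≠ 0` fixed by every linear part `A_γ`:
conjugating by a linear map sending `e₀` to `u` then lands in `G₂`.

Freeness forces `γ = 1` once `A_γ - 1` is invertible, so every `A_γ ≠ 1` fixes a nonzero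
vector. Let `A_g ≠ 1` fix `u`, and suppose `A_h` fixes some `w` but not `u`. In the basis
`(u, w)`, `A_g = [[1, a], [0, b]]` and `A_h = [[c, 0], [d, 1]]`. If `A_g A_h` fixed no nonzero
vector, `gh` would be `1`, forcing `A_g = 1`. Otherwise `A_g` and `A_h` fix a common nonzero
covector `φ`; the commutator `k` of `g` and `h` then satisfies `φ A_k = φ` and `φ t_k = 0`, so
`k` has a fixed point unless `A_k = 1`. Hence `A_g` and `A_h` commute, and commuting matrices
of this shape leave no nonzero vector fixed by `A_g A_h`.
-/

open Function

section DivisionRing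

variable {D : Type*} [DivisionRing D]

/-- Column vectors over `D` form a right vector space, on which matrices act `Dᵐᵒᵖ`-linearly. -/
instance : Module.Finite Dᵐᵒᵖ D :=
  .of_surjective (LinearMap.toSpanSingleton Dᵐᵒᵖ D 1) fun x => ⟨MulOpposite.op x, by simp⟩

namespace Matrix

variable {n : Type*} [Fintype n]

theorem mulVec_surjective_of_injective {A : Matrix n n D} (h : Injective A.mulVec) :
    Surjective A.mulVec :=
  LinearMap.surjective_of_injective (f := mulVecBilin D Dᵐᵒᵖ A) h

theorem isUnit_of_linearIndependent_cols [DecidableEq n] {A : Matrix n n D}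
    (h : LinearIndependent Dᵐᵒᵖ Aᵀ) : IsUnit A := by
  have hinj : Injective (mulVecBilin D Dᵐᵒᵖ A) := by
    refine (injective_iff_map_eq_zero _).2 fun v hv => funext fun i => ?_
    rw [mulVecBilin_apply, mulVec_eq_sum] at hv
    simpa using Fintype.linearIndependent_iff.1 h _ hv i
  obtain ⟨B, hB⟩ :=
    mulVec_surjective_iff_exists_right_inverse.1 (mulVec_surjective_of_injective hinj)
  exact ⟨⟨A, B, hB, mul_eq_one_comm.1 hB⟩, rfl⟩

theorem exists_units_mulVec_single_eq {u w : Fin 2 → D} (h : LinearIndependent Dᵐᵒᵖ ![u, w]) :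
    ∃ Q : (Matrix (Fin 2) (Fin 2) D)ˣ,
      (Q : Matrix (Fin 2) (Fin 2) D) *ᵥ Pi.single 0 1 = u ∧
        (Q : Matrix (Fin 2) (Fin 2) D) *ᵥ Pi.single 1 1 = w := by
  obtain ⟨Q, hQ⟩ := isUnit_of_linearIndependent_cols (A := (of ![u, w])ᵀ) h
  exact ⟨Q, by simp [hQ]⟩

theorem exists_linearIndependent_pair {u : Fin 2 → D} (hu : u ≠ 0) :
    ∃ w, LinearIndependent Dᵐᵒᵖ ![u, w] := by
  have key {i j : Fin 2} (hij : i ≠ j) (hi : u i ≠ 0) :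
      LinearIndependent Dᵐᵒᵖ ![u, Pi.single j 1] :=
    linearIndependent_fin2.2 ⟨by simp, fun a ha => hi <| by
      simp only [cons_val_one, cons_val_zero] at ha
      simp [← ha, hij]⟩
  by_cases h1 : u 1 = 0
  · have h0 : u 0 ≠ 0 := fun h0 => hu (funext (Fin.forall_fin_two.2 ⟨h0, h1⟩))
    exact ⟨_, key zero_ne_one h0⟩
  · exact ⟨_, key one_ne_zero h1⟩

theorem mulVec_conj_eq_self_iff [DecidableEq n] (Q : (Matrix n n D)ˣ) (A : Matrix n n D)
    (x : n → D) : ((↑Q⁻¹ : Matrix n n D) * A * (Q : Matrix n n D)) *ᵥ x = x ↔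
      A *ᵥ ((Q : Matrix n n D) *ᵥ x) = (Q : Matrix n n D) *ᵥ x := by
  rw [← mulVec_mulVec, ← mulVec_mulVec]
  constructor
  · intro h
    simpa [mulVec_mulVec] using congr_arg ((Q : Matrix n n D) *ᵥ ·) h
  · intro h
    rw [h, mulVec_mulVec, Units.inv_mul, one_mulVec]

theorem exists_dotProduct_eq [DecidableEq n] {r : n → D} (hr : r ≠ 0) (c : D) :
    ∃ x, r ⬝ᵥ x = c := by
  obtain ⟨i, hi⟩ := Function.ne_iff.1 hr
  exact ⟨Pi.single i ((r i)⁻¹ * c), by rw [dotProduct_single, mul_inv_cancel_left₀ hi]⟩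

theorem eq_of_mulVec_single_zero {A : Matrix (Fin 2) (Fin 2) D}
    (h : A *ᵥ Pi.single 0 1 = Pi.single 0 1) : A = !![1, A 0 1; 0, A 1 1] := by
  have h0 : A 0 0 = 1 := by simpa using congr_fun h 0
  have h1 : A 1 0 = 0 := by simpa using congr_fun h 1
  exact (eta_fin_two A).trans (by rw [h0, h1])

theorem eq_of_mulVec_single_one {A : Matrix (Fin 2) (Fin 2) D}
    (h : A *ᵥ Pi.single 1 1 = Pi.single 1 1) : A = !![A 0 0, 0; A 1 0, 1] := by
  have h0 : A 0 1 = 0 := by simpa using congr_fun h 0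
  have h1 : A 1 1 = 1 := by simpa using congr_fun h 1
  exact (eta_fin_two A).trans (by rw [h0, h1])

theorem exists_mulVec_eq_of_vecMul_eq_zero {N : Matrix (Fin 2) (Fin 2) D} (hN : N ≠ 0)
    {φ : Fin 2 → D} (hφ : φ ≠ 0) (hφN : φ ᵥ* N = 0) {y : Fin 2 → D} (hy : φ ⬝ᵥ y = 0) :
    ∃ x, N *ᵥ x = y := by
  have hrows : φ 0 • N 0 + φ 1 • N 1 = 0 := by rwa [vecMul_eq_sum, Fin.sum_univ_two] at hφN
  have hann (x : Fin 2 → D) : φ 0 * (N *ᵥ x - y) 0 + φ 1 * (N *ᵥ x - y) 1 = 0 := by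
    rw [← vec2_dotProduct, dotProduct_sub, dotProduct_mulVec, hφN, zero_dotProduct, hy, sub_zero]
  have hNrows : N 0 ≠ 0 ∨ N 1 ≠ 0 := by
    by_contra! h
    exact hN (funext (Fin.forall_fin_two.2 h))
  -- if `φ i ≠ 0`, solve the other row; then `φ ⬝ᵥ (N *ᵥ x - y) = 0` gives row `i`
  obtain ⟨i, hi⟩ := Function.ne_iff.1 hφ
  fin_cases i
  · have h1 : N 1 ≠ 0 := fun h1 => by
      simp only [h1, smul_zero, add_zero, smul_eq_zero] at hrows
      exact hNrows.elim (· (hrows.resolve_left hi)) (· h1)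
    obtain ⟨x, hx⟩ := exists_dotProduct_eq h1 (y 1)
    have hx1 : (N *ᵥ x - y) 1 = 0 := sub_eq_zero.2 hx
    have hx0 := hann x
    rw [hx1, mul_zero, add_zero] at hx0
    exact ⟨x, sub_eq_zero.1 <| funext <|
      Fin.forall_fin_two.2 ⟨(mul_eq_zero.1 hx0).resolve_left hi, hx1⟩⟩
  · have h0 : N 0 ≠ 0 := fun h0 => by
      simp only [h0, smul_zero, zero_add, smul_eq_zero] at hrows
      exact hNrows.elim (· h0) (· (hrows.resolve_left hi))
    obtain ⟨x, hx⟩ := exists_dotProduct_eq h0 (y 0)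
    have hx0 : (N *ᵥ x - y) 0 = 0 := sub_eq_zero.2 hx
    have hx1 := hann x
    rw [hx0, mul_zero, zero_add] at hx1
    exact ⟨x, sub_eq_zero.1 <| funext <|
      Fin.forall_fin_two.2 ⟨hx0, (mul_eq_zero.1 hx1).resolve_left hi⟩⟩

theorem exists_common_fixed_covector {a b c d : D} (hA : !![1, a; 0, b] ≠ 1) {v : Fin 2 → D}
    (hv : v ≠ 0) (hfix : (!![1, a; 0, b] * !![c, 0; d, 1]) *ᵥ v = v) :
    ∃ φ ≠ 0, φ ᵥ* !![1, a; 0, b] = φ ∧ φ ᵥ* !![c, 0; d, 1] = φ := by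
  obtain ⟨h0, h1⟩ : (c + a * d) * v 0 + a * v 1 = v 0 ∧ b * d * v 0 + b * v 1 = v 1 := by
    simpa [funext_iff, Fin.forall_fin_two, mulVec, dotProduct] using hfix
  have hv' : v 0 ≠ 0 ∨ v 1 ≠ 0 := by
    by_contra! h
    exact hv (funext (Fin.forall_fin_two.2 h))
  by_cases ha : a = 0
  · subst ha
    have hb : b ≠ 1 := fun hb => hA (by simp [hb, one_fin_two])
    have hv0 : v 0 ≠ 0 := fun hv0 => by
      simp only [hv0, mul_zero, zero_add] at h1
      exact hb ((mul_eq_right₀ (hv'.resolve_left (not_not.2 hv0))).1 h1)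
    have hc : c = 1 := (mul_eq_right₀ hv0).1 (by simpa using h0)
    exact ⟨![1, 0], by simp, by simp, by simp [hc]⟩
  · have hv0 : v 0 ≠ 0 := fun hv0 => by
      simp only [hv0, mul_zero, zero_add, mul_eq_zero, ha, false_or] at h0
      exact hv'.elim (· hv0) (· h0)
    have hd : (d - (b - 1) * a⁻¹ * (c - 1)) * v 0 =
        (b * d * v 0 + b * v 1 - v 1) - (b - 1) * a⁻¹ * ((c + a * d) * v 0 + a * v 1 - v 0) := by
      have e : (b - 1) * a⁻¹ * ((c + a * d) * v 0 + a * v 1 - v 0) =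
          (b - 1) * a⁻¹ * (c - 1) * v 0 + (b - 1) * (a⁻¹ * a) * (d * v 0 + v 1) := by
        noncomm_ring
      rw [e, inv_mul_cancel₀ ha]
      noncomm_ring
    rw [sub_eq_zero.2 h0, sub_eq_zero.2 h1, mul_zero, sub_zero, mul_eq_zero,
      or_iff_left hv0, sub_eq_zero] at hd
    -- `φ` spans the left kernel of `!![1, a; 0, b] - 1`; by `hd` it also kills `!![c, 0; d, 1] - 1`
    refine ⟨![-((b - 1) * a⁻¹), 1], by simp, ?_, ?_⟩ <;> ext i <;> fin_cases i
    all_goals simp [vecMul, dotProduct, hd, inv_mul_cancel_right₀ ha]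
    noncomm_ring

theorem eq_zero_of_commute_of_mulVec_eq_self {a b c d : D} (hA : !![1, a; 0, b] ≠ 1)
    (hB : !![c, 0; d, 1] ≠ 1) (hcomm : Commute !![1, a; 0, b] !![c, 0; d, 1]) {v : Fin 2 → D}
    (hfix : (!![1, a; 0, b] * !![c, 0; d, 1]) *ᵥ v = v) : v = 0 := by
  have e (i j : Fin 2) := congr_fun (congr_fun hcomm.eq i) j
  obtain ⟨h0, h1⟩ : (c + a * d) * v 0 + a * v 1 = v 0 ∧ b * d * v 0 + b * v 1 = v 1 := by
    simpa [funext_iff, Fin.forall_fin_two, mulVec, dotProduct] using hfix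
  by_cases ha : a = 0
  · subst ha
    have hb : b ≠ 1 := fun hb => hA (by simp [hb, one_fin_two])
    have hd : d = 0 := by
      by_contra hd
      exact hb ((mul_eq_right₀ hd).1 (by simpa using e 1 0))
    subst hd
    have hc : c ≠ 1 := fun hc => hB (by simp [hc, one_fin_two])
    simp only [mul_zero, add_zero, zero_mul, zero_add] at h0 h1
    refine funext (Fin.forall_fin_two.2 ⟨?_, ?_⟩)
    · by_contra hv0
      exact hc ((mul_eq_right₀ hv0).1 h0)
    · by_contra hv1
      exact hb ((mul_eq_right₀ hv1).1 h1)
  · have hc : c = 1 := (mul_eq_right₀ ha).1 (by simpa using (e 0 1).symm)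
    have hd : d = 0 := (by simpa using e 0 0 : a = 0 ∨ d = 0).resolve_left ha
    exact absurd (by simp [hc, hd, one_fin_two]) hB

end Matrix

end DivisionRing

local notation "𝕄₂" => Matrix (Fin 2) (Fin 2) ℍ[ℝ]
local notation "𝕄₃" => Matrix (Fin 3) (Fin 3) ℍ[ℝ]

def linPart (M : 𝕄₃) : 𝕄₂ :=
  !![M 0 0, M 0 1; M 1 0, M 1 1]

def transl (M : 𝕄₃) : Fin 2 → ℍ[ℝ] :=
  ![M 0 2, M 1 2]

def affOfLinear : 𝕄₂ →* 𝕄₃ where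
  toFun Q := !![Q 0 0, Q 0 1, 0; Q 1 0, Q 1 1, 0; 0, 0, 1]
  map_one' := Matrix.ext fun i j => by fin_cases i <;> fin_cases j <;> simp
  map_mul' Q R := Matrix.ext fun i j => by
    fin_cases i <;> fin_cases j <;> simp [mul_apply, Fin.sum_univ_succ]

theorem linPart_one : linPart 1 = 1 := by
  simp [linPart, one_fin_two]

theorem linPart_affOfLinear (Q : 𝕄₂) : linPart (affOfLinear Q) = Q :=
  (eta_fin_two Q).symm

theorem isAffMat_affOfLinear (Q : 𝕄₂) : IsAffMat (affOfLinear Q) :=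
  ⟨rfl, rfl, rfl⟩

theorem isAffMat_iff_row_two {M : 𝕄₃} :
    IsAffMat M ↔ M 2 = Pi.single 2 1 := by
  simp [IsAffMat, funext_iff, Fin.forall_fin_succ]

theorem affAct_eq (M : 𝕄₃) (x : Fin 2 → ℍ[ℝ]) :
    affAct M (x 0, x 1) = ((linPart M *ᵥ x + transl M) 0, (linPart M *ᵥ x + transl M) 1) := by
  simp [affAct, linPart, transl, dotProduct]

namespace IsAffMat

variable {M N : 𝕄₃}

theorem mul (hM : IsAffMat M) (hN : IsAffMat N) : IsAffMat (M * N) := by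
  rw [isAffMat_iff_row_two] at *
  rw [mul_apply_eq_vecMul, hM, single_one_vecMul]
  exact hN

theorem inv {g : (𝕄₃)ˣ} (hg : IsAffMat ↑g) : IsAffMat ↑g⁻¹ := by
  rw [isAffMat_iff_row_two] at *
  have h := mul_apply_eq_vecMul (g : 𝕄₃) (↑g⁻¹ : 𝕄₃) 2
  rw [Units.mul_inv, hg, single_one_vecMul] at h
  exact h.symm.trans (funext fun j => one_eq_pi_single)

theorem linPart_mul (hN : IsAffMat N) : linPart (M * N) = linPart M * linPart N := by
  obtain ⟨h0, h1, -⟩ := hN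
  refine Matrix.ext fun i j => ?_
  fin_cases i <;> fin_cases j <;> simp [linPart, mul_apply, Fin.sum_univ_succ, h0, h1]

theorem transl_mul (hN : IsAffMat N) : transl (M * N) = linPart M *ᵥ transl N + transl M := by
  obtain ⟨-, -, h2⟩ := hN
  refine funext fun i => ?_
  fin_cases i <;> simp [transl, linPart, mul_apply, Fin.sum_univ_succ, h2, dotProduct, add_assoc]

theorem affAct_mul (hN : IsAffMat N) (p : ℍ[ℝ] × ℍ[ℝ]) :
    affAct (M * N) p = affAct M (affAct N p) := by
  obtain ⟨h0, h1, h2⟩ := hN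
  simp only [affAct, mul_apply, Fin.sum_univ_three, h0, h1, h2, Prod.mk.injEq]
  constructor <;> noncomm_ring

theorem linPart_mul_inv {g : (𝕄₃)ˣ} (hg : IsAffMat ↑g) :
    linPart ↑g * linPart ↑g⁻¹ = 1 := by
  rw [← hg.inv.linPart_mul, Units.mul_inv, linPart_one]

theorem dotProduct_transl_mul (hN : IsAffMat N) {φ : Fin 2 → ℍ[ℝ]} (hφ : φ ᵥ* linPart M = φ) :
    φ ⬝ᵥ transl (M * N) = φ ⬝ᵥ transl N + φ ⬝ᵥ transl M := by
  rw [hN.transl_mul, dotProduct_add, dotProduct_mulVec, hφ]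

end IsAffMat

theorem linPart_conj {γ : (𝕄₃)ˣ} (hγ : IsAffMat ↑γ) (Q : (𝕄₂)ˣ) :
    linPart ↑((Units.map affOfLinear Q)⁻¹ * γ * Units.map affOfLinear Q) =
      (↑Q⁻¹ : 𝕄₂) * linPart ↑γ * (Q : 𝕄₂) := by
  rw [Units.val_mul, Units.val_mul, Units.coe_map_inv, Units.coe_map,
    (isAffMat_affOfLinear _).linPart_mul, hγ.linPart_mul, linPart_affOfLinear,
    linPart_affOfLinear]

theorem isAffMat_of_mem_comap_conj {Γ : Subgroup (𝕄₃)ˣ} {P : (𝕄₃)ˣ}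
    (haff : ∀ g ∈ Γ, IsAffMat ↑g) (hP : IsAffMat ↑P) :
    ∀ x ∈ Γ.comap (MulAut.conj P).toMonoidHom, IsAffMat ↑x := by
  intro x hx
  have hx' : x = P⁻¹ * (P * x * P⁻¹) * P := by group
  rw [hx', Units.val_mul, Units.val_mul]
  exact (hP.inv.mul (haff _ hx)).mul hP

namespace ActsFreely

variable {Γ : Subgroup (𝕄₃)ˣ} {g h P : (𝕄₃)ˣ}

theorem comap_conj (haff : ∀ g ∈ Γ, IsAffMat ↑g) (hfree : ActsFreely Γ)
    (hP : IsAffMat ↑P) : ActsFreely (Γ.comap (MulAut.conj P).toMonoidHom) := by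
  rintro x hx ⟨p, hp⟩
  have hfix : affAct ↑(P * x * P⁻¹) (affAct ↑P p) = affAct ↑P p := by
    rw [← hP.affAct_mul, ← Units.val_mul, inv_mul_cancel_right, Units.val_mul,
      (isAffMat_of_mem_comap_conj haff hP x hx).affAct_mul, hp]
  simpa using hfree _ hx ⟨_, hfix⟩

theorem eq_one_of_mulVec_add_transl_eq (hfree : ActsFreely Γ) (hg : g ∈ Γ) {x : Fin 2 → ℍ[ℝ]}
    (hx : linPart ↑g *ᵥ x + transl ↑g = x) : g = 1 :=
  hfree g hg ⟨(x 0, x 1), by rw [affAct_eq, hx]⟩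

theorem eq_one_or_exists_fixed_vector (hfree : ActsFreely Γ) (hg : g ∈ Γ) :
    g = 1 ∨ ∃ v ≠ 0, linPart ↑g *ᵥ v = v := by
  by_cases hinj : Injective (linPart ↑g - 1).mulVec
  · left
    obtain ⟨x, hx⟩ := mulVec_surjective_of_injective hinj (-transl ↑g)
    refine hfree.eq_one_of_mulVec_add_transl_eq hg (x := x) ?_
    rw [sub_mulVec, one_mulVec, sub_eq_iff_eq_add] at hx
    rw [hx, neg_add_cancel_comm]
  · right
    obtain ⟨v, w, hvw, hne⟩ := not_injective_iff.1 hinj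
    refine ⟨v - w, sub_ne_zero.2 hne, ?_⟩
    have hvw' : (linPart ↑g - 1) *ᵥ (v - w) = 0 := by rw [mulVec_sub, hvw, sub_self]
    rwa [sub_mulVec, one_mulVec, sub_eq_zero] at hvw'

theorem linPart_eq_one_of_vecMul_eq (hfree : ActsFreely Γ) (hg : g ∈ Γ) {φ : Fin 2 → ℍ[ℝ]}
    (hφ : φ ≠ 0) (hφg : φ ᵥ* linPart ↑g = φ) (hτ : φ ⬝ᵥ transl ↑g = 0) : linPart ↑g = 1 := by
  by_contra hne
  obtain ⟨x, hx⟩ := exists_mulVec_eq_of_vecMul_eq_zero (sub_ne_zero.2 hne) hφ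
    (by rw [vecMul_sub, hφg, vecMul_one, sub_self]) (y := -transl ↑g)
    (by rw [dotProduct_neg, hτ, neg_zero])
  refine hne ?_
  rw [hfree.eq_one_of_mulVec_add_transl_eq hg (x := x) ?_, Units.val_one, linPart_one]
  rw [sub_mulVec, one_mulVec, sub_eq_iff_eq_add] at hx
  rw [hx, neg_add_cancel_comm]

theorem commute_linPart (haff : ∀ g ∈ Γ, IsAffMat ↑g) (hfree : ActsFreely Γ) (hg : g ∈ Γ)
    (hh : h ∈ Γ) {φ : Fin 2 → ℍ[ℝ]} (hφ : φ ≠ 0) (hφg : φ ᵥ* linPart ↑g = φ)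
    (hφh : φ ᵥ* linPart ↑h = φ) : Commute (linPart ↑g) (linPart ↑h) := by
  have hhg := haff _ (mul_mem hh hg)
  have hgh : (↑(g * h) : 𝕄₃) = (↑(g * h * (h * g)⁻¹) : 𝕄₃) * (↑(h * g) : 𝕄₃) := by
    rw [← Units.val_mul, inv_mul_cancel_right]
  set k := g * h * (h * g)⁻¹
  have hk : k ∈ Γ := mul_mem (mul_mem hg hh) (inv_mem (mul_mem hh hg))
  have hφgh : φ ᵥ* linPart ↑(g * h) = φ := by
    rw [Units.val_mul, (haff h hh).linPart_mul, ← vecMul_vecMul, hφg, hφh]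
  have hφhg : φ ᵥ* linPart ↑(h * g) = φ := by
    rw [Units.val_mul, (haff g hg).linPart_mul, ← vecMul_vecMul, hφh, hφg]
  have hφk : φ ᵥ* linPart ↑k = φ := by
    have hkhg : φ ᵥ* linPart ↑k ᵥ* linPart ↑(h * g) = φ ᵥ* linPart ↑(h * g) := by
      rw [vecMul_vecMul, ← hhg.linPart_mul, ← hgh, hφgh, hφhg]
    calc φ ᵥ* linPart ↑k
        = φ ᵥ* linPart ↑k ᵥ* linPart ↑(h * g) ᵥ* linPart ↑(h * g)⁻¹ := by
          rw [vecMul_vecMul _ (linPart ↑(h * g)), hhg.linPart_mul_inv, vecMul_one]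
      _ = φ := by rw [hkhg, vecMul_vecMul, hhg.linPart_mul_inv, vecMul_one]
  have hτ : φ ⬝ᵥ transl ↑k = 0 := by
    have e := hhg.dotProduct_transl_mul hφk
    rw [← hgh, Units.val_mul, (haff h hh).dotProduct_transl_mul hφg, Units.val_mul,
      (haff g hg).dotProduct_transl_mul hφh, add_comm (φ ⬝ᵥ transl ↑g)] at e
    exact left_eq_add.1 e
  have hL := hfree.linPart_eq_one_of_vecMul_eq hk hφ hφk hτ
  calc linPart ↑g * linPart ↑h = linPart ↑(g * h) := by rw [Units.val_mul, (haff h hh).linPart_mul]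
    _ = linPart ↑(h * g) := by rw [hgh, hhg.linPart_mul, hL, one_mul]
    _ = linPart ↑h * linPart ↑g := by rw [Units.val_mul, (haff g hg).linPart_mul]

theorem linPart_eq_one_of_mulVec_single (haff : ∀ g ∈ Γ, IsAffMat ↑g) (hfree : ActsFreely Γ)
    (hg : g ∈ Γ) (hh : h ∈ Γ) (hA : linPart ↑g ≠ 1)
    (hg0 : linPart ↑g *ᵥ Pi.single 0 1 = Pi.single 0 1)
    (hh1 : linPart ↑h *ᵥ Pi.single 1 1 = Pi.single 1 1) : linPart ↑h = 1 := by
  obtain ⟨a, b, hgL⟩ : ∃ a b, linPart ↑g = !![1, a; 0, b] := ⟨_, _, eq_of_mulVec_single_zero hg0⟩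
  obtain ⟨c, d, hhL⟩ : ∃ c d, linPart ↑h = !![c, 0; d, 1] := ⟨_, _, eq_of_mulVec_single_one hh1⟩
  rw [hgL] at hA
  rw [hhL]
  by_contra hB
  have hgh : linPart ↑(g * h) = !![1, a; 0, b] * !![c, 0; d, 1] := by
    rw [Units.val_mul, (haff h hh).linPart_mul, hgL, hhL]
  rcases hfree.eq_one_or_exists_fixed_vector (mul_mem hg hh) with h1 | ⟨v, hv, hfix⟩
  · rw [h1, Units.val_one, linPart_one] at hgh
    have ha : a = 0 := by simpa using (congr_fun (congr_fun hgh 0) 1).symm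
    have hb : b = 1 := by simpa using (congr_fun (congr_fun hgh 1) 1).symm
    exact hA (by simp [ha, hb, one_fin_two])
  · rw [hgh] at hfix
    obtain ⟨φ, hφ, hφg, hφh⟩ := exists_common_fixed_covector hA hv hfix
    have hcomm := hfree.commute_linPart haff hg hh hφ (hgL ▸ hφg) (hhL ▸ hφh)
    rw [hgL, hhL] at hcomm
    exact hv (eq_zero_of_commute_of_mulVec_eq_self hA hB hcomm hfix)

theorem mulVec_eq_self_of_linearIndependent (haff : ∀ g ∈ Γ, IsAffMat ↑g)
    (hfree : ActsFreely Γ) (hg : g ∈ Γ) (hh : h ∈ Γ) (hgL : linPart ↑g ≠ 1) {u w : Fin 2 → ℍ[ℝ]}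
    (hind : LinearIndependent ℍ[ℝ]ᵐᵒᵖ ![u, w]) (hgu : linPart ↑g *ᵥ u = u)
    (hhw : linPart ↑h *ᵥ w = w) : linPart ↑h *ᵥ u = u := by
  obtain ⟨Q, hQu, hQw⟩ := exists_units_mulVec_single_eq hind
  have hP := isAffMat_affOfLinear Q
  have hmem {x} (hx : x ∈ Γ) :
      (Units.map affOfLinear Q)⁻¹ * x * Units.map affOfLinear Q ∈
        Γ.comap (MulAut.conj (Units.map affOfLinear Q)).toMonoidHom := by
    simpa [mul_assoc] using hx
  -- in the basis `(u, w)`, `g` fixes the first and `h` the second basis vector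
  have key := linPart_eq_one_of_mulVec_single (isAffMat_of_mem_comap_conj haff hP)
    (hfree.comap_conj haff hP) (hmem hg) (hmem hh) ?_ ?_ ?_
  · rw [linPart_conj (haff h hh)] at key
    rw [← hQu, ← mulVec_conj_eq_self_iff, key, one_mulVec]
  · rw [linPart_conj (haff g hg)]
    intro h1
    apply hgL
    calc linPart ↑g = (Q : 𝕄₂) * ((↑Q⁻¹ : 𝕄₂) * linPart ↑g * (Q : 𝕄₂)) * (↑Q⁻¹ : 𝕄₂) := by
          simp [mul_assoc]
      _ = 1 := by rw [h1, mul_one, Units.mul_inv]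
  · rw [linPart_conj (haff g hg), mulVec_conj_eq_self_iff, hQu, hgu]
  · rw [linPart_conj (haff h hh), mulVec_conj_eq_self_iff, hQw, hhw]

theorem exists_common_fixed_vector (haff : ∀ g ∈ Γ, IsAffMat ↑g) (hfree : ActsFreely Γ) :
    ∃ u ≠ 0, ∀ γ ∈ Γ, linPart ↑γ *ᵥ u = u := by
  by_cases htriv : ∀ γ ∈ Γ, linPart ↑γ = 1
  · exact ⟨Pi.single 0 1, by simp, fun γ hγ => by rw [htriv γ hγ, one_mulVec]⟩
  push Not at htriv
  obtain ⟨g, hg, hgL⟩ := htriv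
  obtain ⟨u, hu, hgu⟩ := (hfree.eq_one_or_exists_fixed_vector hg).resolve_left
    (by rintro rfl; exact hgL (by rw [Units.val_one, linPart_one]))
  refine ⟨u, hu, fun h hh => ?_⟩
  by_contra hhu
  obtain ⟨w, hw, hhw⟩ := (hfree.eq_one_or_exists_fixed_vector hh).resolve_left
    (by rintro rfl; exact hhu (by rw [Units.val_one, linPart_one, one_mulVec]))
  have hind : LinearIndependent ℍ[ℝ]ᵐᵒᵖ ![u, w] :=
    linearIndependent_fin2.2 ⟨hw, fun a ha => hhu <| by
      simp only [cons_val_one, cons_val_zero] at ha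
      rw [← ha, mulVec_smul, hhw]⟩
  exact hhu (hfree.mulVec_eq_self_of_linearIndependent haff hg hh hgL hind hgu hhw)

end ActsFreely

theorem inG2_conj {γ : (𝕄₃)ˣ} (hγ : IsAffMat ↑γ) (Q : (𝕄₂)ˣ)
    (hfix : linPart ↑γ *ᵥ ((Q : 𝕄₂) *ᵥ Pi.single 0 1) = (Q : 𝕄₂) *ᵥ Pi.single 0 1) :
    InG2 ↑((Units.map affOfLinear Q)⁻¹ * γ * Units.map affOfLinear Q) := by
  set M := (Units.map affOfLinear Q)⁻¹ * γ * Units.map affOfLinear Q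
  have hM : IsAffMat ↑M := by
    rw [Units.val_mul, Units.val_mul, Units.coe_map_inv, Units.coe_map]
    exact ((isAffMat_affOfLinear _).mul hγ).mul (isAffMat_affOfLinear _)
  have hcol : linPart ↑M *ᵥ Pi.single 0 1 = Pi.single 0 1 := by
    rw [linPart_conj hγ, mulVec_conj_eq_self_iff, hfix]
  have h00 : (M : 𝕄₃) 0 0 = 1 := by simpa [linPart] using congr_fun hcol 0
  have h10 : (M : 𝕄₃) 1 0 = 0 := by simpa [linPart] using congr_fun hcol 1
  refine ⟨h00, h10, fun h11 => ?_, hM⟩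
  -- the second row of the invertible matrix `linPart ↑M` would vanish
  have h := congr_fun (congr_fun hM.linPart_mul_inv 1) 1
  simp [linPart, mul_apply, Fin.sum_univ_two, h10, h11] at h

/-- If `Γ ⊆ Aff(2,ℍ)` acts freely on ℍ², then `Γ` is conjugate in Aff(2,ℍ) to a
subgroup of `G₂`. -/
theorem conjugate_to_subgroup_of_G2
    (Γ : Subgroup (Matrix (Fin 3) (Fin 3) ℍ[ℝ])ˣ)
    (haff : ∀ g ∈ Γ, IsAffMat g.val)
    (hfree : ActsFreely Γ) :
    ∃ P : (Matrix (Fin 3) (Fin 3) ℍ[ℝ])ˣ, IsAffMat P.val ∧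
      ∀ g ∈ Γ, InG2 ((P⁻¹ * g * P).val) := by
  obtain ⟨u, hu, hfix⟩ := hfree.exists_common_fixed_vector haff
  obtain ⟨w, hind⟩ := exists_linearIndependent_pair hu
  obtain ⟨Q, hQu, -⟩ := exists_units_mulVec_single_eq hind
  refine ⟨Units.map affOfLinear Q, isAffMat_affOfLinear Q, fun g hg => ?_⟩
  exact inG2_conj (haff g hg) Q (by rw [hQu, hfix g hg])
end
end

section
/- Let Γ be a subgroup of Aff(2,ℍ) acting freely on ℍ² and suppose that h(Γ) = {h(A) : A ∈ Γ} is an abelian group. Then Γ is conjugate in Aff(2,ℍ) to a subgroup of the group of all matrices of the form [[1,0,r],[0,d,s],[0,0,1]] with d ≠ 0, or to a subgroup of the group of all matrices of the form [[1,b,r],[0,1,s],[0,0,1]]. -/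
/-!
Free action forces every holonomy to fix a nonzero vector: otherwise `h(g) - 1` is invertible
and `g` has a fixed point. A commutative group of 2×2 matrices each fixing a nonzero vector has a
common fixed vector: a nontrivial element fixing `e₀` forces all others to be upper triangular,
each of these has a diagonal entry `1`, and closure under products makes it the same entry for
all; if it is the lower one, the unique fixed vector `(x, 1)` of an element with upper entry
`≠ 1` is fixed by everything. Moving the common fixed vector to `e₀` makes all holonomies
`!![1, b; 0, d]`; a unipotent conjugation kills `b` for one element with `d ≠ 1`, and commutation
then kills it for all. The conjugator embeds block-diagonally into Aff(2,ℍ).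
-/

open Quaternion Matrix

noncomputable section

/-- The holonomy part of an affine matrix `[[a,b,r],[c,d,s],[0,0,1]]`:
the 2×2 matrix `[[a,b],[c,d]]`. -/
def holonomy (M : Matrix (Fin 3) (Fin 3) ℍ[ℝ]) : Matrix (Fin 2) (Fin 2) ℍ[ℝ] :=
  Matrix.of fun i j : Fin 2 => M (Fin.castSucc i) (Fin.castSucc j)

/-- Shape `[[1,0,r],[0,d,s],[0,0,1]]` with `d ≠ 0`. -/
def InH1 (M : Matrix (Fin 3) (Fin 3) ℍ[ℝ]) : Prop :=
  M 0 0 = 1 ∧ M 0 1 = 0 ∧ M 1 0 = 0 ∧ M 1 1 ≠ 0 ∧ IsAffMat M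

/-- Shape `[[1,b,r],[0,1,s],[0,0,1]]`. -/
def InH2 (M : Matrix (Fin 3) (Fin 3) ℍ[ℝ]) : Prop :=
  M 0 0 = 1 ∧ M 1 0 = 0 ∧ M 1 1 = 1 ∧ IsAffMat M

theorem Subgroup.forall_mem_map_conj_inv {G : Type*} [Group G] (S : Subgroup G) (Q : G)
    {P : G → Prop} :
    (∀ t ∈ S.map (MulAut.conj Q⁻¹).toMonoidHom, P t) ↔ ∀ h ∈ S, P (Q⁻¹ * h * Q) := by
  simp

section DivisionRing

variable {D : Type*} [DivisionRing D]

local notation "GL₂" => (Matrix (Fin 2) (Fin 2) D)ˣ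

instance inst_s5 : Module.Finite Dᵐᵒᵖ D :=
  Module.Finite.of_surjective (LinearMap.toSpanSingleton Dᵐᵒᵖ D 1) fun x =>
    ⟨MulOpposite.op x, by simp⟩

theorem Matrix.exists_mulVec_add_eq_self {n : Type*} [Fintype n] (A : Matrix n n D) (t : n → D)
    (h : ∀ v, A *ᵥ v = v → v = 0) : ∃ p, A *ᵥ p + t = p := by
  -- `A *ᵥ ·` commutes with right multiplication by scalars, so it is `Dᵐᵒᵖ`-linear
  let f : (n → D) →ₗ[Dᵐᵒᵖ] (n → D) :=
    { toFun := fun p => A *ᵥ p - p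
      map_add' := fun p q => by simp only [mulVec_add]; abel
      map_smul' := fun c p => by simp [mulVec_smul, smul_sub] }
  have hinj : Function.Injective f := by
    rw [← LinearMap.ker_eq_bot, LinearMap.ker_eq_bot']
    exact fun v hv => h v (sub_eq_zero.mp hv)
  obtain ⟨p, hp⟩ := LinearMap.injective_iff_surjective.mp hinj (-t)
  refine ⟨p, ?_⟩
  rw [sub_eq_iff_eq_add.mp hp]
  abel

def HasFixedVector {n : Type*} [Fintype n] (A : Matrix n n D) : Prop :=
  ∃ v : n → D, v ≠ 0 ∧ A *ᵥ v = v

section Conj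

variable {n : Type*} [Fintype n] [DecidableEq n]

theorem Matrix.conj_mulVec_eq_self_iff (Q h : (Matrix n n D)ˣ) (w : n → D) :
    ((Q⁻¹ * h * Q : (Matrix n n D)ˣ) : Matrix n n D) *ᵥ w = w ↔
      (h : Matrix n n D) *ᵥ ((Q : Matrix n n D) *ᵥ w) = (Q : Matrix n n D) *ᵥ w := by
  simp only [Units.val_mul, ← mulVec_mulVec]
  constructor
  · intro e
    simpa [mulVec_mulVec] using congrArg ((Q : Matrix n n D) *ᵥ ·) e
  · intro e
    rw [e, mulVec_mulVec, Units.inv_mul, one_mulVec]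

theorem HasFixedVector.conj {h : (Matrix n n D)ˣ} (hh : HasFixedVector (h : Matrix n n D))
    (Q : (Matrix n n D)ˣ) : HasFixedVector ((Q⁻¹ * h * Q : (Matrix n n D)ˣ) : Matrix n n D) := by
  obtain ⟨v, hv, hhv⟩ := hh
  have hQ : (Q : Matrix n n D) *ᵥ ((Q⁻¹ : (Matrix n n D)ˣ) : Matrix n n D) *ᵥ v = v := by
    simp [mulVec_mulVec]
  refine ⟨_ *ᵥ v, fun h0 => hv ?_, (conj_mulVec_eq_self_iff Q h _).2 (by rw [hQ, hhv])⟩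
  rw [← hQ, h0, mulVec_zero]

end Conj

theorem Matrix.mulVec_vec_one_zero_eq_iff (A : Matrix (Fin 2) (Fin 2) D) :
    A *ᵥ ![1, 0] = ![1, 0] ↔ A 0 0 = 1 ∧ A 1 0 = 0 := by
  simp [mulVec_fin_two, funext_iff, Fin.forall_fin_two]

theorem Matrix.exists_units_mulVec_vec_one_zero {v : Fin 2 → D} (hv : v ≠ 0) :
    ∃ Q : (Matrix (Fin 2) (Fin 2) D)ˣ, (Q : Matrix (Fin 2) (Fin 2) D) *ᵥ ![1, 0] = v := by
  by_cases hv0 : v 0 = 0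
  · have hv1 : v 1 ≠ 0 := fun hv1 => hv (funext fun i => by fin_cases i <;> simp [hv0, hv1])
    refine ⟨⟨!![0, 1; v 1, 0], !![0, (v 1)⁻¹; 1, 0], ?_, ?_⟩, ?_⟩ <;>
      simp [one_fin_two, hv0, hv1, funext_iff, Fin.forall_fin_two]
  · refine ⟨⟨!![v 0, 0; v 1, 1], !![(v 0)⁻¹, 0; -(v 1 * (v 0)⁻¹), 1], ?_, ?_⟩, ?_⟩ <;>
      simp [one_fin_two, hv0, funext_iff, Fin.forall_fin_two]

theorem Matrix.lower_left_eq_zero_of_commute {A B : Matrix (Fin 2) (Fin 2) D}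
    (hA : A *ᵥ ![1, 0] = ![1, 0]) (hA1 : A ≠ 1) (hAB : Commute A B) : B 1 0 = 0 := by
  rw [mulVec_vec_one_zero_eq_iff] at hA
  have e00 := congrFun₂ hAB.eq 0 0
  have e10 := congrFun₂ hAB.eq 1 0
  simp only [mul_apply, Fin.sum_univ_two, hA.1, hA.2, one_mul, mul_one, zero_mul, mul_zero,
    add_zero, zero_add, add_eq_left] at e00 e10
  by_contra hB
  refine hA1 (Matrix.ext fun i j => ?_)
  fin_cases i <;> fin_cases j
  all_goals simp [hA.1, hA.2, (mul_eq_zero.mp e00).resolve_right hB, (mul_eq_right₀ hB).mp e10]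

theorem HasFixedVector.eq_one_or_eq_one_of_lower_left_eq_zero {A : Matrix (Fin 2) (Fin 2) D}
    (hfix : HasFixedVector A) (hA : A 1 0 = 0) : A 0 0 = 1 ∨ A 1 1 = 1 := by
  obtain ⟨v, hv, hAv⟩ := hfix
  have e0 : A 0 0 * v 0 + A 0 1 * v 1 = v 0 := by simpa using congrFun hAv 0
  have e1 : A 1 1 * v 1 = v 1 := by simpa [hA] using congrFun hAv 1
  by_cases hv1 : v 1 = 0
  · have hv0 : v 0 ≠ 0 := fun hv0 => hv (funext fun i => by fin_cases i <;> simp [hv0, hv1])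
    exact .inl ((mul_eq_right₀ hv0).mp (by simpa [hv1] using e0))
  · exact .inr ((mul_eq_right₀ hv1).mp e1)

theorem Matrix.eq_zero_of_mulVec_eq_self {A : Matrix (Fin 2) (Fin 2) D} (hA00 : A 0 0 ≠ 1)
    {z : Fin 2 → D} (hz : A *ᵥ z = z) (hz1 : z 1 = 0) : z = 0 := by
  have e0 : A 0 0 * z 0 = z 0 := by simpa [hz1] using congrFun hz 0
  have hz0 : z 0 = 0 := (mul_left_eq_self₀.mp e0).resolve_left hA00
  exact funext fun i => by fin_cases i <;> simp [hz0, hz1]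

theorem forall_zero_zero_eq_one_or_forall_one_one_eq_one (T : Subgroup GL₂)
    (htri : ∀ h ∈ T, h.val 1 0 = 0) (hfix : ∀ h ∈ T, HasFixedVector h.val) :
    (∀ h ∈ T, h.val 0 0 = 1) ∨ (∀ h ∈ T, h.val 1 1 = 1) := by
  by_contra! ⟨⟨A, hA, hA00⟩, ⟨B, hB, hB11⟩⟩
  have hA11 := ((hfix A hA).eq_one_or_eq_one_of_lower_left_eq_zero (htri A hA)).resolve_left hA00
  have hB00 := ((hfix B hB).eq_one_or_eq_one_of_lower_left_eq_zero (htri B hB)).resolve_right hB11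
  have hAB := T.mul_mem hA hB
  rcases (hfix _ hAB).eq_one_or_eq_one_of_lower_left_eq_zero (htri _ hAB) with h | h
  · exact hA00 (by simpa [mul_apply, Fin.sum_univ_two, htri B hB, hB00] using h)
  · exact hB11 (by simpa [mul_apply, Fin.sum_univ_two, htri A hA, hA11] using h)

theorem exists_forall_mulVec_eq_self_of_lower_left_eq_zero (T : Subgroup GL₂)
    [IsMulCommutative T] (htri : ∀ h ∈ T, h.val 1 0 = 0) (hfix : ∀ h ∈ T, HasFixedVector h.val) :
    ∃ w : Fin 2 → D, w ≠ 0 ∧ ∀ h ∈ T, h.val *ᵥ w = w := by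
  by_cases h00 : ∀ h ∈ T, h.val 0 0 = 1
  · exact ⟨![1, 0], by simp, fun h hh => (mulVec_vec_one_zero_eq_iff _).2 ⟨h00 h hh, htri h hh⟩⟩
  have h11 := (forall_zero_zero_eq_one_or_forall_one_one_eq_one T htri hfix).resolve_left h00
  push Not at h00
  obtain ⟨A, hA, hA00⟩ := h00
  -- `(x, 1)` is the only fixed vector of `A` with second coordinate `1`, and `B *ᵥ (x, 1)` is one
  set x := -((A.val 0 0 - 1)⁻¹ * A.val 0 1)
  have hx : (A.val 0 0 - 1) * x = -A.val 0 1 := by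
    rw [mul_neg, mul_inv_cancel_left₀ (sub_ne_zero.2 hA00)]
  have hAw : A.val *ᵥ ![x, 1] = ![x, 1] := by
    have e : A.val 0 0 * x + A.val 0 1 = x := by
      calc A.val 0 0 * x + A.val 0 1 = (A.val 0 0 - 1) * x + A.val 0 1 + x := by noncomm_ring
        _ = x := by rw [hx]; abel
    simp [e, htri A hA, h11 A hA]
  refine ⟨![x, 1], by simp, fun B hB => ?_⟩
  have hABw : A.val *ᵥ (B.val *ᵥ ![x, 1]) = B.val *ᵥ ![x, 1] := by
    rw [mulVec_mulVec, ← Units.val_mul, setLike_mul_comm hA hB, Units.val_mul, ← mulVec_mulVec,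
      hAw]
  refine sub_eq_zero.mp (eq_zero_of_mulVec_eq_self hA00 ?_ ?_)
  · rw [mulVec_sub, hABw, hAw]
  · simp [htri B hB, h11 B hB]

theorem exists_forall_mulVec_eq_self (S : Subgroup GL₂) [IsMulCommutative S]
    (hfix : ∀ h ∈ S, HasFixedVector h.val) : ∃ v : Fin 2 → D, v ≠ 0 ∧ ∀ h ∈ S, h.val *ᵥ v = v := by
  by_cases htriv : ∀ h ∈ S, h = 1
  · exact ⟨![1, 0], by simp, fun h hh => by simp [htriv h hh]⟩
  push Not at htriv
  obtain ⟨h₀, h₀S, h₀1⟩ := htriv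
  obtain ⟨v, hv, hh₀v⟩ := hfix h₀ h₀S
  obtain ⟨Q, hQ⟩ := exists_units_mulVec_vec_one_zero hv
  -- conjugating by `Q` moves `v` to `e₀`, and commuting with `h₀` then forces upper triangularity
  have hh₀ : (Q⁻¹ * h₀ * Q).val *ᵥ ![1, 0] = ![1, 0] := by
    rw [conj_mulVec_eq_self_iff, hQ, hh₀v]
  have hh₀1 : (Q⁻¹ * h₀ * Q).val ≠ 1 := by
    rw [Ne, Units.val_eq_one]
    simpa [mul_assoc, inv_mul_eq_iff_eq_mul] using h₀1
  obtain ⟨w, hw, hTw⟩ := exists_forall_mulVec_eq_self_of_lower_left_eq_zero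
    (S.map (MulAut.conj Q⁻¹).toMonoidHom)
    ((S.forall_mem_map_conj_inv Q).2 fun h hh => lower_left_eq_zero_of_commute hh₀ hh₀1 <| by
      simpa using (Commute.conj (setLike_mul_comm h₀S hh) Q⁻¹).units_val)
    ((S.forall_mem_map_conj_inv Q).2 fun h hh => (hfix h hh).conj Q)
  exact ⟨Q.val *ᵥ w, by simpa using (mulVec_injective_of_isUnit Q.isUnit).ne hw,
    fun h hh => (conj_mulVec_eq_self_iff Q h w).1 ((S.forall_mem_map_conj_inv Q).1 hTw h hh)⟩

def InH1Holonomy (A : Matrix (Fin 2) (Fin 2) D) : Prop :=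
  A 0 0 = 1 ∧ A 0 1 = 0 ∧ A 1 0 = 0 ∧ A 1 1 ≠ 0

def InH2Holonomy (A : Matrix (Fin 2) (Fin 2) D) : Prop :=
  A 0 0 = 1 ∧ A 1 0 = 0 ∧ A 1 1 = 1

def Matrix.unipotent (c : D) : GL₂ :=
  ⟨!![1, c; 0, 1], !![1, -c; 0, 1], by simp [one_fin_two], by simp [one_fin_two]⟩

theorem Matrix.unipotent_conj (c : D) {B : Matrix (Fin 2) (Fin 2) D}
    (hB : B *ᵥ ![1, 0] = ![1, 0]) :
    ((unipotent c)⁻¹ * B * unipotent c : Matrix (Fin 2) (Fin 2) D) =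
      !![1, B 0 1 + c - c * B 1 1; 0, B 1 1] := by
  obtain ⟨h00, h10⟩ := (mulVec_vec_one_zero_eq_iff B).1 hB
  conv_lhs => rw [eta_fin_two B, h00, h10]
  simp only [unipotent, Units.inv_mk, mul_fin_two]
  noncomm_ring

theorem Matrix.upper_right_eq_zero_of_commute {a b d : D} (ha : a ≠ 1)
    (h : Commute !![1, 0; 0, a] !![1, b; 0, d]) : b = 0 := by
  have e : b = b * a := by simpa [mul_fin_two] using congrFun₂ h.eq 0 1
  exact (mul_right_eq_self₀.mp e.symm).resolve_left ha

theorem Matrix.units_one_one_ne_zero (h : GL₂) (h10 : h.val 1 0 = 0) : h.val 1 1 ≠ 0 := by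
  have e := congrFun₂ h.val_inv 1 1
  simp only [mul_apply, Fin.sum_univ_two, h10, zero_mul, zero_add, one_apply_eq] at e
  exact left_ne_zero_of_mul_eq_one e

theorem exists_conj_inH1Holonomy_or_inH2Holonomy_of_mulVec_eq_self (T : Subgroup GL₂)
    [IsMulCommutative T] (hT : ∀ h ∈ T, h.val *ᵥ ![1, 0] = ![1, 0]) :
    ∃ U : GL₂, (∀ h ∈ T, InH1Holonomy (U⁻¹ * h * U).val) ∨
      (∀ h ∈ T, InH2Holonomy (U⁻¹ * h * U).val) := by
  by_cases h11 : ∀ h ∈ T, h.val 1 1 = 1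
  · refine ⟨1, .inr fun h hh => ?_⟩
    obtain ⟨h00, h10⟩ := (mulVec_vec_one_zero_eq_iff _).1 (hT h hh)
    simpa [InH2Holonomy, h00, h10] using h11 h hh
  push Not at h11
  obtain ⟨A, hA, hA11⟩ := h11
  -- `c` makes the conjugate of `A` diagonal
  set c := A.val 0 1 * (A.val 1 1 - 1)⁻¹
  have hconj : ∀ h ∈ T, ((unipotent c)⁻¹ * h * unipotent c).val =
      !![1, h.val 0 1 + c - c * h.val 1 1; 0, h.val 1 1] := fun h hh => by
    simp only [Units.val_mul, unipotent_conj c (hT h hh)]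
  have hA01 : A.val 0 1 + c - c * A.val 1 1 = 0 := by
    calc A.val 0 1 + c - c * A.val 1 1 = A.val 0 1 - c * (A.val 1 1 - 1) := by noncomm_ring
      _ = 0 := by rw [inv_mul_cancel_right₀ (sub_ne_zero.2 hA11), sub_self]
  refine ⟨unipotent c, .inl fun h hh => ?_⟩
  have hcomm : Commute ((unipotent c)⁻¹ * A * unipotent c).val
      ((unipotent c)⁻¹ * h * unipotent c).val := by
    simpa using (Commute.conj (setLike_mul_comm hA hh) (unipotent c)⁻¹).units_val
  rw [hconj A hA, hconj h hh, hA01] at hcomm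
  rw [hconj h hh]
  exact ⟨rfl, upper_right_eq_zero_of_commute hA11 hcomm, rfl,
    units_one_one_ne_zero h ((mulVec_vec_one_zero_eq_iff _).1 (hT h hh)).2⟩

theorem exists_conj_inH1Holonomy_or_inH2Holonomy (S : Subgroup GL₂) [IsMulCommutative S]
    (hfix : ∀ h ∈ S, HasFixedVector h.val) :
    ∃ Q : GL₂, (∀ h ∈ S, InH1Holonomy (Q⁻¹ * h * Q).val) ∨
      (∀ h ∈ S, InH2Holonomy (Q⁻¹ * h * Q).val) := by
  obtain ⟨v, hv, hSv⟩ := exists_forall_mulVec_eq_self S hfix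
  obtain ⟨Q, hQ⟩ := exists_units_mulVec_vec_one_zero hv
  obtain ⟨U, hU⟩ := exists_conj_inH1Holonomy_or_inH2Holonomy_of_mulVec_eq_self
    (S.map (MulAut.conj Q⁻¹).toMonoidHom)
    ((S.forall_mem_map_conj_inv Q).2 fun h hh => by rw [conj_mulVec_eq_self_iff, hQ, hSv h hh])
  have hQU : ∀ h : GL₂, (Q * U)⁻¹ * h * (Q * U) = U⁻¹ * (Q⁻¹ * h * Q) * U := fun h => by group
  refine ⟨Q * U, ?_⟩
  simp only [hQU]
  exact hU.imp (S.forall_mem_map_conj_inv Q).1 (S.forall_mem_map_conj_inv Q).1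

end DivisionRing

def affineOfLinear {R : Type*} [Semiring R] :
    Matrix (Fin 2) (Fin 2) R →* Matrix (Fin 3) (Fin 3) R where
  toFun Q := !![Q 0 0, Q 0 1, 0; Q 1 0, Q 1 1, 0; 0, 0, 1]
  map_one' := by
    ext i j
    fin_cases i <;> fin_cases j <;> rfl
  map_mul' A B := by
    ext i j
    fin_cases i <;> fin_cases j <;> simp [mul_apply, Fin.sum_univ_succ]

theorem isAffMat_mul {A B : Matrix (Fin 3) (Fin 3) ℍ[ℝ]} (hA : IsAffMat A) (hB : IsAffMat B) :
    IsAffMat (A * B) := by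
  obtain ⟨hA0, hA1, hA2⟩ := hA
  obtain ⟨hB0, hB1, hB2⟩ := hB
  refine ⟨?_, ?_, ?_⟩ <;> simp [mul_apply, Fin.sum_univ_succ, hA0, hA1, hA2, hB0, hB1, hB2]

theorem holonomy_one : holonomy (1 : Matrix (Fin 3) (Fin 3) ℍ[ℝ]) = 1 := by
  ext i j : 1
  fin_cases i <;> fin_cases j <;> simp [holonomy, one_apply]

theorem holonomy_mul (A : Matrix (Fin 3) (Fin 3) ℍ[ℝ]) {B : Matrix (Fin 3) (Fin 3) ℍ[ℝ]}
    (hB : IsAffMat B) : holonomy (A * B) = holonomy A * holonomy B := by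
  ext i j : 1
  fin_cases i <;> fin_cases j <;> simp [holonomy, mul_apply, Fin.sum_univ_succ, hB.1, hB.2.1]

theorem isAffMat_affineOfLinear (Q : Matrix (Fin 2) (Fin 2) ℍ[ℝ]) :
    IsAffMat (affineOfLinear Q) :=
  ⟨rfl, rfl, rfl⟩

theorem holonomy_affineOfLinear (Q : Matrix (Fin 2) (Fin 2) ℍ[ℝ]) :
    holonomy (affineOfLinear Q) = Q := by
  ext i j : 1
  fin_cases i <;> fin_cases j <;> rfl

theorem isAffMat_affineOfLinear_mul_mul (Q' Q : Matrix (Fin 2) (Fin 2) ℍ[ℝ])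
    {M : Matrix (Fin 3) (Fin 3) ℍ[ℝ]} (hM : IsAffMat M) :
    IsAffMat (affineOfLinear Q' * M * affineOfLinear Q) :=
  isAffMat_mul (isAffMat_mul (isAffMat_affineOfLinear Q') hM) (isAffMat_affineOfLinear Q)

theorem holonomy_affineOfLinear_mul_mul (Q' Q : Matrix (Fin 2) (Fin 2) ℍ[ℝ])
    {M : Matrix (Fin 3) (Fin 3) ℍ[ℝ]} (hM : IsAffMat M) :
    holonomy (affineOfLinear Q' * M * affineOfLinear Q) = Q' * holonomy M * Q := by
  rw [holonomy_mul _ (isAffMat_affineOfLinear Q), holonomy_mul _ hM, holonomy_affineOfLinear,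
    holonomy_affineOfLinear]

theorem inH1_iff {M : Matrix (Fin 3) (Fin 3) ℍ[ℝ]} :
    InH1 M ↔ InH1Holonomy (holonomy M) ∧ IsAffMat M := by
  simp only [InH1, InH1Holonomy, and_assoc]
  rfl

theorem inH2_iff {M : Matrix (Fin 3) (Fin 3) ℍ[ℝ]} :
    InH2 M ↔ InH2Holonomy (holonomy M) ∧ IsAffMat M := by
  simp only [InH2, InH2Holonomy, and_assoc]
  rfl

def holonomyHom (Γ : Subgroup (Matrix (Fin 3) (Fin 3) ℍ[ℝ])ˣ)
    (haff : ∀ g ∈ Γ, IsAffMat g.val) : Γ →* (Matrix (Fin 2) (Fin 2) ℍ[ℝ])ˣ where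
  toFun g :=
    ⟨holonomy g.val.val, holonomy (g.val⁻¹).val,
      by rw [← holonomy_mul _ (haff _ (Γ.inv_mem g.2)), Units.mul_inv, holonomy_one],
      by rw [← holonomy_mul _ (haff _ g.2), Units.inv_mul, holonomy_one]⟩
  map_one' := Units.ext holonomy_one
  map_mul' a b := Units.ext (holonomy_mul _ (haff _ b.2))

theorem val_holonomyHom_apply (Γ : Subgroup (Matrix (Fin 3) (Fin 3) ℍ[ℝ])ˣ)
    (haff : ∀ g ∈ Γ, IsAffMat g.val) (g : Γ) : (holonomyHom Γ haff g).val = holonomy g.val.val :=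
  rfl

theorem affAct_eq_self_of_mulVec_add_eq_self (M : Matrix (Fin 3) (Fin 3) ℍ[ℝ])
    {p : Fin 2 → ℍ[ℝ]} (hp : holonomy M *ᵥ p + ![M 0 2, M 1 2] = p) :
    affAct M (p 0, p 1) = (p 0, p 1) := by
  have e0 := congrFun hp 0
  have e1 := congrFun hp 1
  simp only [mulVec_fin_two, holonomy, of_apply, Pi.add_apply] at e0 e1
  exact Prod.ext e0 e1

theorem ActsFreely.hasFixedVector_holonomy {Γ : Subgroup (Matrix (Fin 3) (Fin 3) ℍ[ℝ])ˣ}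
    (hfree : ActsFreely Γ) {g : (Matrix (Fin 3) (Fin 3) ℍ[ℝ])ˣ} (hg : g ∈ Γ) :
    HasFixedVector (holonomy g.val) := by
  by_contra hno
  have hker : ∀ v, holonomy g.val *ᵥ v = v → v = 0 := fun v hv =>
    by_contra fun hv0 => hno ⟨v, hv0, hv⟩
  obtain ⟨p, hp⟩ := (holonomy g.val).exists_mulVec_add_eq_self ![g.val 0 2, g.val 1 2] hker
  have hg1 : g = 1 := hfree g hg ⟨_, affAct_eq_self_of_mulVec_add_eq_self _ hp⟩
  simpa using hker ![1, 0] (by simp [hg1, holonomy_one])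

/-- If `Γ ⊆ Aff(2,ℍ)` acts freely on ℍ² and its holonomy group `h(Γ)` is abelian, then
`Γ` is conjugate in Aff(2,ℍ) to a subgroup of the group of matrices `[[1,0,r],[0,d,s],[0,0,1]]`
(`d ≠ 0`) or to a subgroup of the group of matrices `[[1,b,r],[0,1,s],[0,0,1]]`. -/
theorem abelian_holonomy_conjugation
    (Γ : Subgroup (Matrix (Fin 3) (Fin 3) ℍ[ℝ])ˣ)
    (haff : ∀ g ∈ Γ, IsAffMat g.val)
    (hfree : ActsFreely Γ)
    (habel : ∀ A ∈ Γ, ∀ B ∈ Γ,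
      holonomy A.val * holonomy B.val = holonomy B.val * holonomy A.val) :
    ∃ P : (Matrix (Fin 3) (Fin 3) ℍ[ℝ])ˣ, IsAffMat P.val ∧
      ((∀ g ∈ Γ, InH1 ((P⁻¹ * g * P).val)) ∨ (∀ g ∈ Γ, InH2 ((P⁻¹ * g * P).val))) := by
  let S := (holonomyHom Γ haff).range
  have : IsMulCommutative S := IsMulCommutative.of_setLike_mul_comm <| by
    rintro _ ⟨g, rfl⟩ _ ⟨g', rfl⟩
    exact Units.ext (habel _ g.2 _ g'.2)
  obtain ⟨Q, hQ⟩ := exists_conj_inH1Holonomy_or_inH2Holonomy S <| by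
    rintro _ ⟨g, rfl⟩
    exact hfree.hasFixedVector_holonomy g.2
  refine ⟨Units.map (affineOfLinear (R := ℍ[ℝ])) Q, isAffMat_affineOfLinear Q,
    hQ.imp (fun hS g hg => ?_) (fun hS g hg => ?_)⟩
  all_goals simp only [Units.val_mul, Units.coe_map_inv, Units.coe_map]
  · rw [inH1_iff, holonomy_affineOfLinear_mul_mul _ _ (haff g hg)]
    refine ⟨?_, isAffMat_affineOfLinear_mul_mul _ _ (haff g hg)⟩
    simpa [val_holonomyHom_apply] using hS _ ⟨⟨g, hg⟩, rfl⟩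
  · rw [inH2_iff, holonomy_affineOfLinear_mul_mul _ _ (haff g hg)]
    refine ⟨?_, isAffMat_affineOfLinear_mul_mul _ _ (haff g hg)⟩
    simpa [val_holonomyHom_apply] using hS _ ⟨⟨g, hg⟩, rfl⟩
end
end

section
/- Let b, r, s, d ∈ ℍ with d ≠ 1, and let A = [[1,b,r],[0,d,s],[0,0,1]]. Then for every positive integer n, Aⁿ = [[1, b(d−1)⁻¹(dⁿ−1), b(d−1)⁻²(dⁿ−1)s + n·r − b·n·(d−1)⁻¹s], [0, dⁿ, (d−1)⁻¹(dⁿ−1)s], [0,0,1]], where all products are quaternion products in the written order and (d−1)⁻¹ is the quaternionic inverse of d−1. -/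
/-!
Multiplying out `A ^ (n + 1) = A * A ^ n` shows that the entries of `A ^ n` are the geometric
sum `Gₙ = ∑_{i<n} dⁱ` (scaled by `b` and `s`) and, in the corner, `n r + b (∑_{k<n} G_k) s`; this
holds over any semiring. Over a division ring with `d ≠ 1`, `(d - 1) Gₙ = dⁿ - 1` gives
`Gₙ = (d - 1)⁻¹ (dⁿ - 1)`, and summing that once more gives the corner entry.
-/

open Quaternion Matrix

noncomputable section

open Finset

theorem pow_of_affine_matrix_eq_geom_sum {R : Type*} [Semiring R] (b r s d : R) (n : ℕ) :
    (!![1, b, r; 0, d, s; 0, 0, 1]) ^ n =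
      !![1, b * ∑ i ∈ range n, d ^ i,
            (n : R) * r + b * (∑ k ∈ range n, ∑ i ∈ range k, d ^ i) * s;
         0, d ^ n, (∑ i ∈ range n, d ^ i) * s;
         0, 0, 1] := by
  induction n with
  | zero => ext i j; fin_cases i <;> fin_cases j <;> simp [one_apply]
  | succ n ih =>
    rw [pow_succ', ih, mul_fin_three, sum_range_succ (fun k => ∑ i ∈ range k, d ^ i), pow_succ']
    simp only [mul_one, mul_zero, one_mul, zero_mul, add_zero, zero_add, Nat.cast_succ]
    congr 3
    · rw [sum_range_succ (fun i => d ^ i)]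
      simp only [mul_add, add_mul, one_mul, mul_assoc]
      abel_nf
    · rw [geom_sum_succ, add_mul, one_mul, mul_assoc]

section DivisionRing

variable {K : Type*} [DivisionRing K] {x : K}

theorem geom_sum_eq_inv_mul (hx : x ≠ 1) (n : ℕ) :
    ∑ i ∈ range n, x ^ i = (x - 1)⁻¹ * (x ^ n - 1) :=
  (eq_inv_mul_iff_mul_eq₀ (sub_ne_zero.mpr hx)).2 (mul_geom_sum x n)

theorem sum_range_geom_sum_eq (hx : x ≠ 1) (n : ℕ) :
    ∑ k ∈ range n, ∑ i ∈ range k, x ^ i = (x - 1)⁻¹ ^ 2 * (x ^ n - 1) - n * (x - 1)⁻¹ := by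
  simp_rw [geom_sum_eq_inv_mul hx, ← mul_sum, sum_sub_distrib, sum_const, card_range,
    geom_sum_eq_inv_mul hx, nsmul_eq_mul, mul_one, mul_sub, (Nat.cast_commute n _).eq, sq,
    mul_assoc]

end DivisionRing

theorem pow_of_affine_matrix_general
    (b r s d : ℍ[ℝ]) (hd : d ≠ 1) (n : ℕ) :
    (!![1, b, r; 0, d, s; 0, 0, 1]) ^ n =
      !![1, b * (d - 1)⁻¹ * (d ^ n - 1),
            b * ((d - 1)⁻¹) ^ 2 * (d ^ n - 1) * s + (n : ℍ[ℝ]) * r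
              - b * (n : ℍ[ℝ]) * (d - 1)⁻¹ * s;
         0, d ^ n, (d - 1)⁻¹ * (d ^ n - 1) * s;
         0, 0, 1] := by
  rw [pow_of_affine_matrix_eq_geom_sum, geom_sum_eq_inv_mul hd, sum_range_geom_sum_eq hd]
  congr 3; noncomm_ring

/-- Explicit formula for the powers of `A = [[1,b,r],[0,d,s],[0,0,1]]` when `d ≠ 1`. -/
theorem pow_of_affine_matrix
    (b r s d : ℍ[ℝ]) (hd : d ≠ 1) (n : ℕ) (hn : 0 < n) :
    (!![1, b, r; 0, d, s; 0, 0, 1]) ^ n =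
      !![1, b * (d - 1)⁻¹ * (d ^ n - 1),
            b * ((d - 1)⁻¹) ^ 2 * (d ^ n - 1) * s + (n : ℍ[ℝ]) * r
              - b * (n : ℍ[ℝ]) * (d - 1)⁻¹ * s;
         0, d ^ n, (d - 1)⁻¹ * (d ^ n - 1) * s;
         0, 0, 1] :=
  pow_of_affine_matrix_general b r s d hd n
end
end

section
/- For every n×n quaternionic matrix M, the complex determinant of ψ(M) is a nonnegative real number: det(ψ(M)) ∈ ℝ and det(ψ(M)) ≥ 0. -/
open Quaternion Matrix

noncomputable section

/-- The complex number `A` in the entrywise decomposition `q = A + Bj` of a quaternion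
(`ℂ = ℝ + ℝi ⊆ ℍ`). -/
def qPart1 (q : ℍ[ℝ]) : ℂ := ⟨q.re, q.imI⟩

/-- The complex number `B` in the entrywise decomposition `q = A + Bj` of a quaternion. -/
def qPart2 (q : ℍ[ℝ]) : ℂ := ⟨q.imJ, q.imK⟩

/-- The complex representation `ψ(M) = [[A, -conj B],[B, conj A]]` of a quaternionic
`n×n` matrix `M = A + Bj` (a `2n×2n` complex matrix). -/
def psi {n : ℕ} (M : Matrix (Fin n) (Fin n) ℍ[ℝ]) :
    Matrix (Fin n ⊕ Fin n) (Fin n ⊕ Fin n) ℂ :=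
  Matrix.fromBlocks (M.map qPart1) (-(M.map fun q => (starRingEnd ℂ) (qPart2 q)))
    (M.map qPart2) (M.map fun q => (starRingEnd ℂ) (qPart1 q))

/-- `λ` is a right eigenvalue of `M` if `Mv = vλ` for some nonzero column vector `v`. -/
def IsRightEigenvalue {n : ℕ} (M : Matrix (Fin n) (Fin n) ℍ[ℝ]) (l : ℍ[ℝ]) : Prop :=
  ∃ v : Fin n → ℍ[ℝ], v ≠ 0 ∧ M.mulVec v = fun i => v i * l

/-! For `q = a + bj`, the map `q ↦ [[a, b], [-b̄, ā]]` is an `ℝ`-algebra embedding `ℍ → M₂(ℂ)`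
with `det = |q|²`; applied entrywise it gives a multiplicative map `Mₙ(ℍ) → M₂ₙ(ℂ)` whose
determinant is `det ψ(Mᵀ)`. Gaussian elimination over the skew field `ℍ` is compatible with it:
a column permutation of `M` permutes the columns of the image by a permutation of sign
`sign(σ)² = 1`, and unipotent block-triangular factors have determinant `1`. Splitting off a
nonzero pivot therefore multiplies the determinant by `|pivot|² ≥ 0`, and induction on `n` shows
it is a nonnegative real. -/

open Complex ComplexConjugate
open scoped ComplexOrder

def quaternionToMatrix : ℍ[ℝ] →ₐ[ℝ] Matrix (Fin 2) (Fin 2) ℂ :=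
  QuaternionAlgebra.lift
    { i := !![I, 0; 0, -I]
      j := !![0, 1; -1, 0]
      k := !![0, I; I, 0]
      i_mul_i := by ext i j; fin_cases i <;> fin_cases j <;> simp
      j_mul_j := by ext i j; fin_cases i <;> fin_cases j <;> simp
      i_mul_j := by ext i j; fin_cases i <;> fin_cases j <;> simp
      j_mul_i := by ext i j; fin_cases i <;> fin_cases j <;> simp }

theorem quaternionToMatrix_apply (q : ℍ[ℝ]) :
    quaternionToMatrix q = !![qPart1 q, qPart2 q; -conj (qPart2 q), conj (qPart1 q)] := by
  change algebraMap ℝ _ q.re + q.imI • !![I, 0; 0, -I] + q.imJ • !![0, 1; -1, 0]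
    + q.imK • !![0, I; I, 0] = _
  ext i j; fin_cases i <;> fin_cases j <;>
    simp [qPart1, qPart2, Complex.ext_iff, Algebra.algebraMap_eq_smul_one]

theorem det_quaternionToMatrix (q : ℍ[ℝ]) :
    (quaternionToMatrix q).det = ((Quaternion.normSq q : ℝ) : ℂ) := by
  rw [quaternionToMatrix_apply, det_fin_two_of]
  simp only [qPart1, qPart2, normSq_def']
  apply Complex.ext <;> simp [pow_two] <;> ring

def complexRep (ι : Type*) [Fintype ι] [DecidableEq ι] :
    Matrix ι ι ℍ[ℝ] →ₐ[ℝ] Matrix (ι × Fin 2) (ι × Fin 2) ℂ :=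
  (compAlgEquiv ι (Fin 2) ℂ ℝ).toAlgHom.comp quaternionToMatrix.mapMatrix

section

variable {ι κ : Type*} [Fintype ι] [DecidableEq ι] [Fintype κ] [DecidableEq κ]

theorem complexRep_apply (M : Matrix ι ι ℍ[ℝ]) (i j : ι) (a b : Fin 2) :
    complexRep ι M (i, a) (j, b) = quaternionToMatrix (M i j) a b :=
  rfl

theorem complexRep_fromBlocks (A : Matrix ι ι ℍ[ℝ]) (B : Matrix ι κ ℍ[ℝ])
    (C : Matrix κ ι ℍ[ℝ]) (D : Matrix κ κ ℍ[ℝ]) :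
    (complexRep (ι ⊕ κ) (fromBlocks A B C D)).submatrix (Equiv.sumProdDistrib ι κ (Fin 2)).symm
        (Equiv.sumProdDistrib ι κ (Fin 2)).symm =
      fromBlocks (complexRep ι A) (comp ι κ (Fin 2) (Fin 2) ℂ (B.map quaternionToMatrix))
        (comp κ ι (Fin 2) (Fin 2) ℂ (C.map quaternionToMatrix)) (complexRep κ D) := by
  ext (⟨i, a⟩ | ⟨i, a⟩) (⟨j, b⟩ | ⟨j, b⟩) <;> rfl

theorem det_complexRep_fromBlocks_zero₂₁ (A : Matrix ι ι ℍ[ℝ]) (B : Matrix ι κ ℍ[ℝ])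
    (D : Matrix κ κ ℍ[ℝ]) :
    (complexRep (ι ⊕ κ) (fromBlocks A B 0 D)).det =
      (complexRep ι A).det * (complexRep κ D).det := by
  rw [← det_submatrix_equiv_self (Equiv.sumProdDistrib ι κ (Fin 2)).symm, complexRep_fromBlocks,
    Matrix.map_zero _ (map_zero _)]
  exact det_fromBlocks_zero₂₁ _ _ _

theorem det_complexRep_fromBlocks_zero₁₂ (A : Matrix ι ι ℍ[ℝ]) (C : Matrix κ ι ℍ[ℝ])
    (D : Matrix κ κ ℍ[ℝ]) :
    (complexRep (ι ⊕ κ) (fromBlocks A 0 C D)).det =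
      (complexRep ι A).det * (complexRep κ D).det := by
  rw [← det_submatrix_equiv_self (Equiv.sumProdDistrib ι κ (Fin 2)).symm, complexRep_fromBlocks,
    Matrix.map_zero _ (map_zero _)]
  exact det_fromBlocks_zero₁₂ _ _ _

theorem det_complexRep_fromBlocks_of_mul_eq_one (A : Matrix ι ι ℍ[ℝ]) (B : Matrix ι κ ℍ[ℝ])
    (C : Matrix κ ι ℍ[ℝ]) {D E : Matrix κ κ ℍ[ℝ]} (hDE : D * E = 1) :
    (complexRep (ι ⊕ κ) (fromBlocks A B C D)).det =
      (complexRep ι (A - B * E * C)).det * (complexRep κ D).det := by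
  set L : Matrix (ι ⊕ κ) (ι ⊕ κ) ℍ[ℝ] := fromBlocks 1 0 (-(E * C)) 1
  have hL : (complexRep (ι ⊕ κ) L).det = 1 := by
    rw [det_complexRep_fromBlocks_zero₁₂]
    simp only [map_one, det_one, mul_one]
  have hmul : fromBlocks A B C D * L = fromBlocks (A - B * E * C) B 0 D := by
    rw [fromBlocks_multiply, Matrix.mul_neg, Matrix.mul_neg, ← Matrix.mul_assoc D, hDE,
      Matrix.one_mul]
    simp [sub_eq_add_neg, Matrix.mul_assoc]
  calc (complexRep (ι ⊕ κ) (fromBlocks A B C D)).det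
      = (complexRep (ι ⊕ κ) (fromBlocks A B C D * L)).det := by
        rw [map_mul, det_mul, hL, mul_one]
    _ = _ := by rw [hmul, det_complexRep_fromBlocks_zero₂₁]

theorem det_complexRep_of_unique [Unique κ] (D : Matrix κ κ ℍ[ℝ]) :
    (complexRep κ D).det = ((Quaternion.normSq (D default default) : ℝ) : ℂ) := by
  rw [← det_quaternionToMatrix, ← det_submatrix_equiv_self (Equiv.uniqueProd (Fin 2) κ).symm]
  rfl

theorem det_complexRep_submatrix_perm (M : Matrix ι ι ℍ[ℝ]) (σ : Equiv.Perm ι) :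
    (complexRep ι (M.submatrix id σ)).det = (complexRep ι M).det := by
  have hsign : Equiv.Perm.sign (Equiv.prodCongrLeft fun _ : Fin 2 => σ) = 1 := by
    rw [Equiv.Perm.sign_prodCongrLeft, Fin.prod_univ_two, Int.units_mul_self]
  change ((complexRep ι M).submatrix id (Equiv.prodCongrLeft fun _ : Fin 2 => σ)).det = _
  rw [det_permute', hsign, Units.val_one, Int.cast_one, one_mul]

theorem det_complexRep_submatrix_equiv (M : Matrix κ κ ℍ[ℝ]) (e : ι ≃ κ) :
    (complexRep ι (M.submatrix e e)).det = (complexRep κ M).det :=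
  det_submatrix_equiv_self (e.prodCongr (Equiv.refl (Fin 2))) (complexRep κ M)

theorem det_complexRep_nonneg_of_pivot_ne_zero [Unique κ]
    (hι : ∀ A : Matrix ι ι ℍ[ℝ], 0 ≤ (complexRep ι A).det) (N : Matrix (ι ⊕ κ) (ι ⊕ κ) ℍ[ℝ])
    (hN : N (.inr default) (.inr default) ≠ 0) : 0 ≤ (complexRep (ι ⊕ κ) N).det := by
  have hinv : N.toBlocks₂₂ * of (fun _ _ => (N (.inr default) (.inr default))⁻¹) = 1 := by
    refine Matrix.ext fun x y => ?_
    rw [Subsingleton.elim x default, Subsingleton.elim y default]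
    simp [mul_apply, toBlocks₂₂, hN]
  rw [← fromBlocks_toBlocks N, det_complexRep_fromBlocks_of_mul_eq_one _ _ _ hinv,
    det_complexRep_of_unique N.toBlocks₂₂]
  exact mul_nonneg (hι _) (Complex.zero_le_real.2 (normSq_nonneg))

theorem det_complexRep_nonneg_of_sum_unique [Unique κ]
    (hι : ∀ A : Matrix ι ι ℍ[ℝ], 0 ≤ (complexRep ι A).det) (N : Matrix (ι ⊕ κ) (ι ⊕ κ) ℍ[ℝ]) :
    0 ≤ (complexRep (ι ⊕ κ) N).det := by
  by_cases hrow : ∀ j, N (.inr default) j = 0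
  · have hzero : (complexRep (ι ⊕ κ) N).det = 0 :=
      det_eq_zero_of_row_eq_zero (.inr default, 0) fun ⟨j, b⟩ => by
        simp [complexRep_apply, hrow]
    exact hzero.ge
  push Not at hrow
  obtain ⟨j, hj⟩ := hrow
  rw [← det_complexRep_submatrix_perm N (Equiv.swap j (.inr default))]
  exact det_complexRep_nonneg_of_pivot_ne_zero hι _ (by simpa using hj)

theorem det_complexRep_nonneg_fin (n : ℕ) (M : Matrix (Fin n) (Fin n) ℍ[ℝ]) :
    0 ≤ (complexRep (Fin n) M).det := by
  induction n with
  | zero => simp [det_isEmpty]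
  | succ n ih =>
    rw [← det_complexRep_submatrix_equiv M finSumFinEquiv]
    exact det_complexRep_nonneg_of_sum_unique ih _

theorem det_complexRep_nonneg (M : Matrix ι ι ℍ[ℝ]) : 0 ≤ (complexRep ι M).det := by
  rw [← det_complexRep_submatrix_equiv M (Fintype.equivFin ι).symm]
  exact det_complexRep_nonneg_fin _ _

end

theorem det_psi_eq_det_complexRep_transpose {n : ℕ} (M : Matrix (Fin n) (Fin n) ℍ[ℝ]) :
    (psi M).det = (complexRep (Fin n) Mᵀ).det := by
  let e : Fin n ⊕ Fin n ≃ Fin n × Fin 2 :=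
    (Equiv.boolProdEquivSum (Fin n)).symm.trans
      ((Equiv.prodComm _ _).trans ((Equiv.refl _).prodCongr finTwoEquiv.symm))
  have hpsi : psi M = ((complexRep (Fin n) Mᵀ)ᵀ).submatrix e e := by
    have h0 : finTwoEquiv.symm false = 0 := rfl
    have h1 : finTwoEquiv.symm true = 1 := rfl
    ext (i | i) (j | j) <;>
      simp [psi, e, complexRep_apply, quaternionToMatrix_apply, Equiv.boolProdEquivSum, h0, h1]
  rw [hpsi, det_submatrix_equiv_self, det_transpose]

/-- For every quaternionic `n×n` matrix `M`, `det(ψ(M))` is a nonnegative real number. -/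
theorem det_psi_nonneg_real
    (n : ℕ) (M : Matrix (Fin n) (Fin n) ℍ[ℝ]) :
    ∃ x : ℝ, 0 ≤ x ∧ (psi M).det = (x : ℂ) := by
  obtain ⟨x, hx, hdet⟩ := RCLike.nonneg_iff_exists_ofReal.1 (det_complexRep_nonneg Mᵀ)
  exact ⟨x, hx, (det_psi_eq_det_complexRep_transpose M).trans hdet.symm⟩

end
end
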